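/- For any ω-narrow subset A of a topological group X, the subgroup of X generated by A is ω-narrow. -/

import Mathlib

/-- Left ω-narrow subset of a topological group. -/
def LeftOmegaNarrow {X : Type*} [Group X] [TopologicalSpace X] (A : Set X) : Prop :=
  ∀ U ∈ nhds (1 : X), ∃ C : Set X, C.Countable ∧ A ⊆ ⋃ c ∈ C, (fun u => c * u) '' U

/-- Right ω-narrow subset of a topological group. -/
def RightOmegaNarrow {X : Type*} [Group X] [TopologicalSpace X] (A : Set X) : Prop :=
  ∀ U ∈ nhds (1 : X), ∃ C : Set X, C.Countable ∧ A ⊆ ⋃ c ∈ C, (fun u => u * c) '' U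

/-- ω-narrow subset: both left and right ω-narrow. -/
def OmegaNarrow {X : Type*} [Group X] [TopologicalSpace X] (A : Set X) : Prop :=
  LeftOmegaNarrow A ∧ RightOmegaNarrow A

/-!
The subgroup generated by `A` is the union of the powers `(A ∪ A⁻¹) ^ n`. Inversion exchanges left
and right ω-narrowness, so `A ∪ A⁻¹` is left ω-narrow, and left ω-narrowness survives countable
unions and products: if `B ⊆ E * V` with `E` countable, then `A * B ⊆ (A * E) * V`, and `A * E` is a
countable union of translates `A * {e}`, each left ω-narrow since `A ⊆ D * W` gives
`A * {e} ⊆ (D * {e}) * (e⁻¹ * W * e)` and conjugation by `e` preserves neighborhoods of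
`1`. A subgroup equals its inverse, so it is right ω-narrow as soon as it is left ω-narrow.
-/

open Pointwise Topology

theorem Submonoid.coe_closure_subset_iUnion_pow {M : Type*} [Monoid M] (S : Set M) :
    (Submonoid.closure S : Set M) ⊆ ⋃ n : ℕ, S ^ n := by
  intro x hx
  induction hx using Submonoid.closure_induction with
  | mem a ha => exact Set.mem_iUnion.2 ⟨1, by rwa [pow_one]⟩
  | one => exact Set.mem_iUnion.2 ⟨0, Set.one_mem_one⟩
  | mul a b _ _ ha hb =>
    obtain ⟨n, hn⟩ := Set.mem_iUnion.1 ha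
    obtain ⟨m, hm⟩ := Set.mem_iUnion.1 hb
    exact Set.mem_iUnion.2 ⟨n + m, pow_add S n m ▸ Set.mul_mem_mul hn hm⟩

section

variable {X : Type*} [Group X] [TopologicalSpace X]

theorem leftOmegaNarrow_iff {A : Set X} :
    LeftOmegaNarrow A ↔ ∀ U ∈ 𝓝 (1 : X), ∃ C : Set X, C.Countable ∧ A ⊆ C * U := by
  simp only [LeftOmegaNarrow, Set.iUnion_mul_left_image]

theorem rightOmegaNarrow_iff {A : Set X} :
    RightOmegaNarrow A ↔ ∀ U ∈ 𝓝 (1 : X), ∃ C : Set X, C.Countable ∧ A ⊆ U * C := by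
  simp only [RightOmegaNarrow, Set.iUnion_mul_right_image]

namespace LeftOmegaNarrow

theorem mono {A B : Set X} (hB : LeftOmegaNarrow B) (hAB : A ⊆ B) : LeftOmegaNarrow A :=
  fun U hU => (hB U hU).imp fun _ ⟨hC, hBC⟩ => ⟨hC, hAB.trans hBC⟩

theorem of_countable {A : Set X} (hA : A.Countable) : LeftOmegaNarrow A :=
  leftOmegaNarrow_iff.2 fun _ hU => ⟨A, hA, Set.subset_mul_left A (mem_of_mem_nhds hU)⟩

theorem union {A B : Set X} (hA : LeftOmegaNarrow A) (hB : LeftOmegaNarrow B) :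
    LeftOmegaNarrow (A ∪ B) := by
  refine leftOmegaNarrow_iff.2 fun U hU => ?_
  obtain ⟨C, hC, hAC⟩ := leftOmegaNarrow_iff.1 hA U hU
  obtain ⟨D, hD, hBD⟩ := leftOmegaNarrow_iff.1 hB U hU
  refine ⟨C ∪ D, hC.union hD, ?_⟩
  rw [Set.union_mul]
  exact Set.union_subset_union hAC hBD

theorem iUnion {ι : Type*} [Countable ι] {A : ι → Set X} (h : ∀ i, LeftOmegaNarrow (A i)) :
    LeftOmegaNarrow (⋃ i, A i) := by
  refine leftOmegaNarrow_iff.2 fun U hU => ?_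
  choose C hC hAC using fun i => leftOmegaNarrow_iff.1 (h i) U hU
  refine ⟨⋃ i, C i, Set.countable_iUnion hC, ?_⟩
  rw [Set.iUnion_mul]
  exact Set.iUnion_mono hAC

theorem biUnion {ι : Type*} {s : Set ι} (hs : s.Countable) {A : ι → Set X}
    (h : ∀ i ∈ s, LeftOmegaNarrow (A i)) : LeftOmegaNarrow (⋃ i ∈ s, A i) := by
  have := hs.to_subtype
  rw [Set.biUnion_eq_iUnion]
  exact iUnion fun i => h i i.2

end LeftOmegaNarrow

section ContinuousInv

variable [ContinuousInv X]

theorem inv_mem_nhds_one_of_mem {U : Set X} (hU : U ∈ 𝓝 (1 : X)) : U⁻¹ ∈ 𝓝 (1 : X) :=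
  continuous_inv.tendsto' 1 1 inv_one hU

theorem RightOmegaNarrow.inv {A : Set X} (h : RightOmegaNarrow A) : LeftOmegaNarrow A⁻¹ := by
  refine leftOmegaNarrow_iff.2 fun U hU => ?_
  obtain ⟨C, hC, hAC⟩ := rightOmegaNarrow_iff.1 h U⁻¹ (inv_mem_nhds_one_of_mem hU)
  refine ⟨C⁻¹, hC.preimage inv_injective, ?_⟩
  simpa only [mul_inv_rev, inv_inv] using Set.inv_subset_inv.2 hAC

theorem LeftOmegaNarrow.inv {A : Set X} (h : LeftOmegaNarrow A) : RightOmegaNarrow A⁻¹ := by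
  refine rightOmegaNarrow_iff.2 fun U hU => ?_
  obtain ⟨C, hC, hAC⟩ := leftOmegaNarrow_iff.1 h U⁻¹ (inv_mem_nhds_one_of_mem hU)
  refine ⟨C⁻¹, hC.preimage inv_injective, ?_⟩
  simpa only [mul_inv_rev, inv_inv] using Set.inv_subset_inv.2 hAC

theorem rightOmegaNarrow_iff_leftOmegaNarrow_inv {A : Set X} :
    RightOmegaNarrow A ↔ LeftOmegaNarrow A⁻¹ :=
  ⟨RightOmegaNarrow.inv, fun h => inv_inv A ▸ h.inv⟩

end ContinuousInv

namespace LeftOmegaNarrow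

variable [ContinuousMul X]

theorem mul_singleton {A : Set X} (hA : LeftOmegaNarrow A) (e : X) :
    LeftOmegaNarrow (A * {e}) := by
  refine leftOmegaNarrow_iff.2 fun U hU => ?_
  have hW : (fun x => e⁻¹ * x * e) ⁻¹' U ∈ 𝓝 (1 : X) :=
    ((continuous_const_mul e⁻¹).mul continuous_const).tendsto' 1 1 (by simp) hU
  obtain ⟨D, hD, hAD⟩ := leftOmegaNarrow_iff.1 hA _ hW
  refine ⟨D * {e}, hD.image _ |>.mono Set.mul_singleton.subset, ?_⟩
  rw [Set.mul_singleton]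
  rintro _ ⟨a, ha, rfl⟩
  obtain ⟨d, hd, w, hw, rfl⟩ := hAD ha
  exact ⟨d * e, Set.mul_mem_mul hd rfl, e⁻¹ * w * e, hw, by group⟩

theorem mul_countable {A E : Set X} (hA : LeftOmegaNarrow A) (hE : E.Countable) :
    LeftOmegaNarrow (A * E) := by
  rw [← Set.biUnion_of_singleton E, Set.mul_iUnion₂]
  exact biUnion hE fun e _ => hA.mul_singleton e

theorem mul {A B : Set X} (hA : LeftOmegaNarrow A) (hB : LeftOmegaNarrow B) :
    LeftOmegaNarrow (A * B) := by
  refine leftOmegaNarrow_iff.2 fun U hU => ?_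
  obtain ⟨V, hV, hVU⟩ := exists_nhds_one_split hU
  obtain ⟨E, hE, hBE⟩ := leftOmegaNarrow_iff.1 hB V hV
  obtain ⟨D, hD, hAED⟩ := leftOmegaNarrow_iff.1 (hA.mul_countable hE) V hV
  refine ⟨D, hD, ?_⟩
  calc A * B ⊆ A * E * V := mul_assoc A E V ▸ Set.mul_subset_mul_left hBE
    _ ⊆ D * V * V := Set.mul_subset_mul_right hAED
    _ ⊆ D * U := by
      rw [mul_assoc]
      exact Set.mul_subset_mul_left (Set.mul_subset_iff.2 hVU)

theorem pow {A : Set X} (hA : LeftOmegaNarrow A) (n : ℕ) :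
    LeftOmegaNarrow (A ^ n) := by
  induction n with
  | zero => exact of_countable (Set.countable_singleton 1)
  | succ n ih => exact pow_succ A n ▸ ih.mul hA

end LeftOmegaNarrow

end

theorem omegaNarrow_closure_subgroup {X : Type*} [Group X] [TopologicalSpace X]
    [IsTopologicalGroup X] (A : Set X) (hA : OmegaNarrow A) :
    OmegaNarrow ((Subgroup.closure A : Subgroup X) : Set X) := by
  have hleft : LeftOmegaNarrow ((Subgroup.closure A : Subgroup X) : Set X) := by
    refine (LeftOmegaNarrow.iUnion (hA.1.union hA.2.inv).pow).mono ?_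
    rw [← Subgroup.coe_toSubmonoid, Subgroup.closure_toSubmonoid]
    exact Submonoid.coe_closure_subset_iUnion_pow _
  refine ⟨hleft, rightOmegaNarrow_iff_leftOmegaNarrow_inv.2 ?_⟩
  rwa [inv_coe_set]
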